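/- arXiv:1501.04853 — 3 statements merged into one kernel-verified Lean document; each statement's English description precedes it below -/
import Mathlib

section
/- Let n ≥ 1, T > 0, and let Ψ : ℝ → GL(2n, ℝ) take values in the symplectic group of the standard symplectic form on ℝ^{2n}, with Ψ(0) = Id, Ψ(t + T) = Ψ(t) · Ψ(T) for all t ∈ ℝ, and Ψ(−t) = I · Ψ(t) · I for all t ∈ ℝ. Then ker(Ψ(T) − Id) = {0} if and only if both Ψ(T/2)(ℝⁿ ⊕ 0) ∩ (ℝⁿ ⊕ 0) = {0} and Ψ(T/2)(0 ⊕ ℝⁿ) ∩ (0 ⊕ ℝⁿ) = {0}. -/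
open Matrix

/-- The standard complex structure `J₀ = [[0, -Idₙ], [Idₙ, 0]]` on `ℝ^{2n} = ℝⁿ ⊕ ℝⁿ`. -/
noncomputable def J0 (n : ℕ) : Matrix (Fin n ⊕ Fin n) (Fin n ⊕ Fin n) ℝ :=
  Matrix.fromBlocks 0 (-1) 1 0

/-- The block-diagonal involution `I = diag(Idₙ, -Idₙ)`. -/
noncomputable def Imat (n : ℕ) : Matrix (Fin n ⊕ Fin n) (Fin n ⊕ Fin n) ℝ :=
  Matrix.fromBlocks 1 0 0 (-1)

/-- The subspace `ℝⁿ ⊕ 0` of `ℝ^{2n} = ℝⁿ ⊕ ℝⁿ`. -/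
noncomputable def realAxis (n : ℕ) : Submodule ℝ ((Fin n ⊕ Fin n) → ℝ) :=
  LinearMap.ker (LinearMap.funLeft ℝ ℝ (Sum.inr : Fin n → Fin n ⊕ Fin n))

/-- The subspace `0 ⊕ ℝⁿ` of `ℝ^{2n} = ℝⁿ ⊕ ℝⁿ`. -/
noncomputable def imagAxis (n : ℕ) : Submodule ℝ ((Fin n ⊕ Fin n) → ℝ) :=
  LinearMap.ker (LinearMap.funLeft ℝ ℝ (Sum.inl : Fin n → Fin n ⊕ Fin n))

/-! Write `A = Ψ(T/2)`. Periodicity at `t = -T/2` together with reversibility gives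
`A = I A I Ψ(T)`, hence `IA - AI = AI (Ψ(T) - 1)`; as `A` is symplectic, hence invertible,
`ker (Ψ(T) - 1) = ker (IA - AI)`. This kernel is `I`-invariant, so it splits along the
eigenspaces `ℝⁿ ⊕ 0` and `0 ⊕ ℝⁿ` of the involution `I`, and its part in either eigenspace `E`
consists of the `x ∈ E` with `Ax ∈ E`. -/

namespace Module.End

open LinearMap

variable {R V : Type*} [Ring R] [AddCommGroup V] [Module R V] {i a p : Module.End R V}

theorem map_inf_eq_bot_iff (ha : Function.Injective a) (E : Submodule R V) :
    E.map a ⊓ E = ⊥ ↔ ∀ x ∈ E, a x ∈ E → x = 0 := by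
  simp only [Submodule.eq_bot_iff, Submodule.mem_inf, Submodule.mem_map, and_imp,
    forall_exists_index]
  refine ⟨fun h x hx hax ↦ ha ?_, fun h _ x hx hax hy ↦ ?_⟩
  · rw [h (a x) x hx rfl hax, map_zero]
  · subst hax
    rw [h x hx hy, map_zero]

theorem involutive_of_mul_self_eq_one (hi : i * i = 1) : Function.Involutive i :=
  fun y ↦ by simpa using congr($hi y)

theorem mem_ker_sub_one_iff {x : V} : x ∈ ker (i - 1) ↔ i x = x := by
  simp [sub_eq_zero]

theorem mem_ker_add_one_iff {x : V} : x ∈ ker (i + 1) ↔ i x = -x := by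
  simp [add_eq_zero_iff_eq_neg]

theorem mem_ker_commutator_iff_of_mem_ker_sub_one {x : V} (hx : x ∈ ker (i - 1)) :
    x ∈ ker (i * a - a * i) ↔ a x ∈ ker (i - 1) := by
  rw [mem_ker_sub_one_iff] at hx
  simp [sub_eq_zero, hx]

theorem mem_ker_commutator_iff_of_mem_ker_add_one {x : V} (hx : x ∈ ker (i + 1)) :
    x ∈ ker (i * a - a * i) ↔ a x ∈ ker (i + 1) := by
  rw [mem_ker_add_one_iff] at hx
  simp [hx]

theorem apply_mem_ker_commutator (hi : i * i = 1) {x : V} (hx : x ∈ ker (i * a - a * i)) :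
    i x ∈ ker (i * a - a * i) := by
  simp only [mem_ker, LinearMap.sub_apply, mul_apply, sub_eq_zero] at hx ⊢
  rw [involutive_of_mul_self_eq_one hi, ← hx, involutive_of_mul_self_eq_one hi]

theorem ker_commutator_eq_bot_iff [IsAddTorsionFree V] (hi : i * i = 1)
    (ha : Function.Injective a) :
    ker (i * a - a * i) = ⊥ ↔
      (ker (i - 1)).map a ⊓ ker (i - 1) = ⊥ ∧ (ker (i + 1)).map a ⊓ ker (i + 1) = ⊥ := by
  have hii := involutive_of_mul_self_eq_one hi
  rw [map_inf_eq_bot_iff ha, map_inf_eq_bot_iff ha, Submodule.eq_bot_iff]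
  constructor
  · intro h
    exact ⟨fun x hx hax ↦ h x ((mem_ker_commutator_iff_of_mem_ker_sub_one hx).2 hax),
      fun x hx hax ↦ h x ((mem_ker_commutator_iff_of_mem_ker_add_one hx).2 hax)⟩
  · rintro ⟨hpos, hneg⟩ x hx
    have hix := apply_mem_ker_commutator hi hx
    have hxpos : x + i x ∈ ker (i - 1) := by
      rw [mem_ker_sub_one_iff, map_add, hii, add_comm]
    have hxneg : x - i x ∈ ker (i + 1) := by
      rw [mem_ker_add_one_iff, map_sub, hii, neg_sub]
    have h₁ : x + i x = 0 := hpos _ hxpos <|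
      (mem_ker_commutator_iff_of_mem_ker_sub_one hxpos).1 (add_mem hx hix)
    have h₂ : x - i x = 0 := hneg _ hxneg <|
      (mem_ker_commutator_iff_of_mem_ker_add_one hxneg).1 (sub_mem hx hix)
    rw [sub_eq_zero] at h₂
    rwa [← h₂, ← two_nsmul, two_nsmul_eq_zero] at h₁

theorem ker_sub_one_eq_ker_commutator (hi : i * i = 1) (ha : Function.Injective a)
    (h : a = i * a * i * p) : ker (p - 1) = ker (i * a - a * i) := by
  have hia : i * a = a * i * p := by
    conv_lhs => rw [h]
    simp only [← mul_assoc, hi, one_mul]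
  have hfactor : i * a - a * i = (a * i) * (p - 1) := by
    rw [mul_sub, mul_one, hia]
  have hinj : ker (a * i) = ⊥ :=
    ker_eq_bot.2 <| ha.comp (involutive_of_mul_self_eq_one hi).injective
  rw [hfactor, mul_eq_comp, ker_comp_of_ker_eq_bot _ hinj]

end Module.End

theorem Imat_mul_Imat (n : ℕ) : Imat n * Imat n = 1 := by
  simp [Imat, fromBlocks_multiply, ← fromBlocks_one]

theorem Imat_mulVec (n : ℕ) (x : Fin n ⊕ Fin n → ℝ) :
    Imat n *ᵥ x = Sum.elim (x ∘ Sum.inl) (-(x ∘ Sum.inr)) := by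
  simp [Imat, fromBlocks_mulVec, neg_mulVec]

theorem realAxis_eq_ker (n : ℕ) : realAxis n = LinearMap.ker ((Imat n).mulVecLin - 1) := by
  ext x
  simp [realAxis, Imat_mulVec, funext_iff, LinearMap.funLeft, sub_eq_zero, neg_eq_self]

theorem imagAxis_eq_ker (n : ℕ) : imagAxis n = LinearMap.ker ((Imat n).mulVecLin + 1) := by
  ext x
  simp [imagAxis, Imat_mulVec, funext_iff, LinearMap.funLeft]

theorem stmt0_general (n : ℕ) (T : ℝ)
    (Ψ : ℝ → Matrix (Fin n ⊕ Fin n) (Fin n ⊕ Fin n) ℝ)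
    (hsymp : ∀ t, (Ψ t)ᵀ * J0 n * Ψ t = J0 n)
    (hper : ∀ t, Ψ (t + T) = Ψ t * Ψ T)
    (hsym : ∀ t, Ψ (-t) = Imat n * Ψ t * Imat n) :
    LinearMap.ker (Ψ T - 1).mulVecLin = ⊥ ↔
      ((realAxis n).map (Ψ (T / 2)).mulVecLin ⊓ realAxis n = ⊥ ∧
        (imagAxis n).map (Ψ (T / 2)).mulVecLin ⊓ imagAxis n = ⊥) := by
  set A := Ψ (T / 2)
  have hlin (M : Matrix (Fin n ⊕ Fin n) (Fin n ⊕ Fin n) ℝ) : M.mulVecLin = toLinAlgEquiv' M := rfl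
  simp only [hlin, map_sub, map_one]
  have hA : Function.Injective (toLinAlgEquiv' A) := by
    have hdet := SymplecticGroup.symplectic_det (SymplecticGroup.mem_iff'.2 (hsymp (T / 2)))
    exact mulVec_injective_iff_isUnit.2 ((isUnit_iff_isUnit_det A).2 hdet)
  have hI : toLinAlgEquiv' (Imat n) * toLinAlgEquiv' (Imat n) = 1 := by
    rw [← map_mul, Imat_mul_Imat, map_one]
  have hhalf : A = Imat n * A * Imat n * Ψ T := by
    rw [← hsym, ← hper, neg_add_eq_sub, sub_half]
  rw [Module.End.ker_sub_one_eq_ker_commutator hI hA (by simpa using congr(toLinAlgEquiv' $hhalf)),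
    Module.End.ker_commutator_eq_bot_iff hI hA, realAxis_eq_ker, imagAxis_eq_ker, hlin]

/-- A symplectic path `Ψ` with `Ψ(0) = Id`, `Ψ(t+T) = Ψ(t)Ψ(T)` and `Ψ(-t) = IΨ(t)I`
is nondegenerate at time `T` iff both Lagrangian boundary problems at time `T/2`
are nondegenerate. -/
theorem stmt0 (n : ℕ) (hn : 1 ≤ n) (T : ℝ) (hT : 0 < T)
    (Ψ : ℝ → Matrix (Fin n ⊕ Fin n) (Fin n ⊕ Fin n) ℝ)
    (hsymp : ∀ t, (Ψ t)ᵀ * J0 n * Ψ t = J0 n)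
    (h0 : Ψ 0 = 1)
    (hper : ∀ t, Ψ (t + T) = Ψ t * Ψ T)
    (hsym : ∀ t, Ψ (-t) = Imat n * Ψ t * Imat n) :
    LinearMap.ker (Ψ T - 1).mulVecLin = ⊥ ↔
      ((realAxis n).map (Ψ (T / 2)).mulVecLin ⊓ realAxis n = ⊥ ∧
        (imagAxis n).map (Ψ (T / 2)).mulVecLin ⊓ imagAxis n = ⊥) :=
  stmt0_general n T Ψ hsymp hper hsym
end

section
/- Let T > 0, let S : ℝ → Mat₂(ℝ) be continuous with each S(t) symmetric, S(−t) = I · S(t) · I and S(t + T) = S(t) for all t ∈ ℝ, and let λ ∈ ℝ. Suppose γ : [0, T/2] → ℝ² is differentiable and satisfies −J₀ γ′(t) − S(t) γ(t) = λ γ(t) for all t ∈ [0, T/2]. Define δ : [T/2, T] → ℝ² by δ(t) := I γ(T − t). Then −J₀ δ′(t) − S(t) δ(t) = λ δ(t) for all t ∈ [T/2, T]; moreover, if γ(T/2) ∈ ℝ × {0} then δ(T/2) = γ(T/2), and if γ(0) ∈ ℝ × {0} then δ(T) = γ(0), so the concatenation of γ and δ is a continuous solution on [0, T]. -/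
/-!
The reflection `t ↦ T - t` reverses the direction of time, which flips the sign of `γ'`;
since `I` anticommutes with `J₀`, conjugating by `I` flips it back. The symmetry and the
periodicity of `S` combine to `S t = I S(T - t) I`, so `I γ(T - t)` solves the same equation.
On the real axis `I` is the identity, which gives the matching endpoints.
-/

open Matrix Set

/-- The standard complex structure `J₀` on `ℝ²`. -/
noncomputable def J₀ : Matrix (Fin 2) (Fin 2) ℝ := !![0, -1; 1, 0]

/-- The reflection `I = diag(1, -1)` on `ℝ²`. -/
noncomputable def I2 : Matrix (Fin 2) (Fin 2) ℝ := !![1, 0; 0, -1]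

lemma I2_mul_I2 : I2 * I2 = 1 := by
  simp [I2, Matrix.one_fin_two]

lemma J₀_mul_I2 : J₀ * I2 = -(I2 * J₀) := by
  simp [I2, J₀]

lemma I2_mulVec_of_apply_one_eq_zero {v : Fin 2 → ℝ} (hv : v 1 = 0) : I2 *ᵥ v = v := by
  ext i
  fin_cases i <;> simp [I2, Matrix.mulVec, dotProduct, Fin.sum_univ_two, hv]

lemma apply_eq_conj_apply_sub_of_periodic {α M : Type*} [AddGroup α] [Mul M] (S : α → M) (R : M)
    {T : α} (hsym : ∀ t, S (-t) = R * S t * R) (hper : ∀ t, S (t + T) = S t) (t : α) :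
    S t = R * S (T - t) * R := by
  have h := hper (-(T - t))
  rwa [hsym, neg_sub, sub_add_cancel] at h

section Reflection

variable {n : Type*} [Fintype n]

lemma HasDerivWithinAt.mulVec_comp_const_sub {γ : ℝ → n → ℝ} {v : n → ℝ} {s u : Set ℝ}
    {T t : ℝ} (A : Matrix n n ℝ) (hγ : HasDerivWithinAt γ v s (T - t))
    (hmaps : MapsTo (T - ·) u s) :
    HasDerivWithinAt (fun t => A *ᵥ γ (T - t)) (-(A *ᵥ v)) u t := by
  have hA := A.mulVecLin.toContinuousLinearMap.hasFDerivAt.comp_hasDerivWithinAt (T - t) hγ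
  have hsub : HasDerivWithinAt (T - ·) (-1) u t := by
    simpa using (hasDerivWithinAt_id t u).const_sub T
  simpa [Function.comp_def] using hA.scomp t hsub hmaps

lemma neg_mulVec_sub_conj_mulVec_eq_smul [DecidableEq n] {J R S : Matrix n n ℝ} (hR : R * R = 1)
    (hJR : J * R = -(R * J)) {v v' : n → ℝ} {lam : ℝ}
    (h : -(J *ᵥ v') - S *ᵥ v = lam • v) :
    -(J *ᵥ -(R *ᵥ v')) - (R * S * R) *ᵥ (R *ᵥ v) = lam • (R *ᵥ v) := by
  have hconj : (R * S * R) *ᵥ (R *ᵥ v) = R *ᵥ (S *ᵥ v) := by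
    rw [mulVec_mulVec, Matrix.mul_assoc, Matrix.mul_assoc, hR, Matrix.mul_one, ← mulVec_mulVec]
  have hJ : -(J *ᵥ -(R *ᵥ v')) = -(R *ᵥ (J *ᵥ v')) := by
    rw [mulVec_neg, neg_neg, mulVec_mulVec, hJR, neg_mulVec, ← mulVec_mulVec]
  rw [hconj, hJ, ← mulVec_neg, ← mulVec_sub, h, mulVec_smul]

end Reflection

theorem stmt9_general (T : ℝ)
    (S : ℝ → Matrix (Fin 2) (Fin 2) ℝ)
    (hSsym : ∀ t, S (-t) = I2 * S t * I2)
    (hSper : ∀ t, S (t + T) = S t)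
    (lam : ℝ)
    (γ γ' : ℝ → Fin 2 → ℝ)
    (hγd : ∀ t ∈ Icc (0 : ℝ) (T / 2), HasDerivWithinAt γ (γ' t) (Icc 0 (T / 2)) t)
    (hγeq : ∀ t ∈ Icc (0 : ℝ) (T / 2),
      -(J₀.mulVec (γ' t)) - (S t).mulVec (γ t) = lam • γ t)
    (δ : ℝ → Fin 2 → ℝ)
    (hδ : ∀ t, δ t = I2.mulVec (γ (T - t))) :
    (∀ t ∈ Icc (T / 2) T,
        HasDerivWithinAt δ (-(I2.mulVec (γ' (T - t)))) (Icc (T / 2) T) t ∧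
        -(J₀.mulVec (-(I2.mulVec (γ' (T - t))))) - (S t).mulVec (δ t) = lam • δ t) ∧
      (γ (T / 2) 1 = 0 → δ (T / 2) = γ (T / 2)) ∧
      (γ 0 1 = 0 → δ T = γ 0) := by
  have hmaps : MapsTo (T - ·) (Icc (T / 2) T) (Icc 0 (T / 2)) := fun t ht =>
    ⟨by linarith [ht.2], by linarith [ht.1]⟩
  obtain rfl : δ = fun t => I2 *ᵥ γ (T - t) := funext hδ
  refine ⟨fun t ht => ⟨?_, ?_⟩, fun h => ?_, fun h => ?_⟩
  · exact (hγd _ (hmaps ht)).mulVec_comp_const_sub I2 hmaps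
  · rw [apply_eq_conj_apply_sub_of_periodic S I2 hSsym hSper t]
    exact neg_mulVec_sub_conj_mulVec_eq_smul I2_mul_I2 J₀_mul_I2 (hγeq _ (hmaps ht))
  · dsimp only
    rw [show T - T / 2 = T / 2 by ring]
    exact I2_mulVec_of_apply_one_eq_zero h
  · dsimp only
    rw [sub_self]
    exact I2_mulVec_of_apply_one_eq_zero h

/-- If `γ` solves `-J₀ γ' - S γ = λ γ` on `[0, T/2]` (with `S` symmetric,
`S(-t) = I S(t) I`, `T`-periodic), then `δ(t) = I γ(T - t)` solves the same equation
on `[T/2, T]`, with matching endpoints when `γ(T/2)` resp. `γ(0)` lie on the real axis. -/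
theorem stmt9 (T : ℝ) (hT : 0 < T)
    (S : ℝ → Matrix (Fin 2) (Fin 2) ℝ)
    (hScont : ∀ i j, Continuous fun t => S t i j)
    (hSsymm : ∀ t, (S t)ᵀ = S t)
    (hSsym : ∀ t, S (-t) = I2 * S t * I2)
    (hSper : ∀ t, S (t + T) = S t)
    (lam : ℝ)
    (γ γ' : ℝ → Fin 2 → ℝ)
    (hγd : ∀ t ∈ Icc (0 : ℝ) (T / 2), HasDerivWithinAt γ (γ' t) (Icc 0 (T / 2)) t)
    (hγeq : ∀ t ∈ Icc (0 : ℝ) (T / 2),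
      -(J₀.mulVec (γ' t)) - (S t).mulVec (γ t) = lam • γ t)
    (δ : ℝ → Fin 2 → ℝ)
    (hδ : ∀ t, δ t = I2.mulVec (γ (T - t))) :
    (∀ t ∈ Icc (T / 2) T,
        HasDerivWithinAt δ (-(I2.mulVec (γ' (T - t)))) (Icc (T / 2) T) t ∧
        -(J₀.mulVec (-(I2.mulVec (γ' (T - t))))) - (S t).mulVec (δ t) = lam • δ t) ∧
      (γ (T / 2) 1 = 0 → δ (T / 2) = γ (T / 2)) ∧
      (γ 0 1 = 0 → δ T = γ 0) :=
  stmt9_general T S hSsym hSper lam γ γ' hγd hγeq δ hδ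
end

section
/- Identify ℂ² with ℝ⁴ via coordinates p = (x₁, y₁, x₂, y₂). Define the 1-form λ on ℝ⁴ by λ(p)(v) = (1/2)(p₁ v₂ − p₂ v₁ + p₃ v₄ − p₄ v₃) for v = (v₁, v₂, v₃, v₄) ∈ ℝ⁴, and the 1-form λ_FS on ℝ⁴ by λ_FS(p)(v) = λ(p)(v)/(1 + ‖p‖²). Let B = {p ∈ ℝ⁴ : ‖p‖ < 1} be the open unit ball and define 𝒮 : B → ℝ⁴ by 𝒮(p) = p/√(1 − ‖p‖²). Then 𝒮 is differentiable on B and for every p ∈ B and every v ∈ ℝ⁴: λ_FS(𝒮(p))(D𝒮(p) · v) = λ(p)(v); that is, 𝒮*λ_FS = λ on B. -/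
/-- The standard Liouville 1-form `λ(p)(v) = (1/2)(x₁ dy₁ - y₁ dx₁ + x₂ dy₂ - y₂ dx₂)`
on `ℂ² ≅ ℝ⁴`, with coordinates `p = (x₁, y₁, x₂, y₂)`. -/
noncomputable def lamStd (p v : EuclideanSpace ℝ (Fin 4)) : ℝ :=
  (1 / 2) * (p 0 * v 1 - p 1 * v 0 + p 2 * v 3 - p 3 * v 2)

/-- The Fubini-Study primitive `λ_FS(p)(v) = λ(p)(v) / (1 + ‖p‖²)`. -/
noncomputable def lamFS (p v : EuclideanSpace ℝ (Fin 4)) : ℝ :=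
  lamStd p v / (1 + ‖p‖ ^ 2)

/-- The map `𝒮(p) = p / √(1 - ‖p‖²)` on the open unit ball. -/
noncomputable def Smap (p : EuclideanSpace ℝ (Fin 4)) : EuclideanSpace ℝ (Fin 4) :=
  (1 / Real.sqrt (1 - ‖p‖ ^ 2)) • p

/-! `𝒮` is a radial rescaling `p ↦ a(‖p‖²) • p`, so `D𝒮(p) v = a v + b p` for some scalar `b`.
Since `λ(p)(p) = 0`, pulling back gives `a² λ(p)(v)`, and `a² = 1 / (1 - ‖p‖²) = 1 + ‖𝒮 p‖²`
is exactly the Fubini–Study denominator. -/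

section RadialScaling

variable {E : Type*} [NormedAddCommGroup E] [InnerProductSpace ℝ E] {f : ℝ → ℝ} {p : E}

theorem hasFDerivAt_comp_normSq_smul (hf : DifferentiableAt ℝ f (‖p‖ ^ 2)) :
    HasFDerivAt (fun x : E => f (‖x‖ ^ 2) • x)
      (f (‖p‖ ^ 2) • ContinuousLinearMap.id ℝ E +
        (deriv f (‖p‖ ^ 2) • (2 • innerSL ℝ p)).smulRight p) p := by
  have hnormSq : HasFDerivAt (fun x : E => ‖x‖ ^ 2) (2 • innerSL ℝ p) p := by
    simpa using (hasFDerivAt_id p).norm_sq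
  exact (hf.hasDerivAt.comp_hasFDerivAt p hnormSq).smul (hasFDerivAt_id p)

theorem fderiv_comp_normSq_smul_apply (hf : DifferentiableAt ℝ f (‖p‖ ^ 2)) (v : E) :
    fderiv ℝ (fun x : E => f (‖x‖ ^ 2) • x) p v =
      f (‖p‖ ^ 2) • v + (deriv f (‖p‖ ^ 2) * (2 * inner ℝ p v)) • p := by
  rw [(hasFDerivAt_comp_normSq_smul hf).fderiv]
  simp

end RadialScaling

theorem lamStd_smul_smul_add (p v : EuclideanSpace ℝ (Fin 4)) (a b : ℝ) :
    lamStd (a • p) (a • v + b • p) = a ^ 2 * lamStd p v := by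
  simp only [lamStd, PiLp.add_apply, PiLp.smul_apply, smul_eq_mul]
  ring

theorem lamFS_smul_smul_add {p : EuclideanSpace ℝ (Fin 4)} {a : ℝ}
    (ha : a ^ 2 * (1 - ‖p‖ ^ 2) = 1) (v : EuclideanSpace ℝ (Fin 4)) (b : ℝ) :
    lamFS (a • p) (a • v + b • p) = lamStd p v := by
  have hden : 1 + ‖a • p‖ ^ 2 = a ^ 2 := by
    rw [norm_smul, mul_pow, Real.norm_eq_abs, sq_abs]
    linarith
  have ha0 : a ^ 2 ≠ 0 := by
    rintro h
    simp [h] at ha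
  rw [lamFS, lamStd_smul_smul_add, hden, mul_div_cancel_left₀ _ ha0]

theorem differentiableAt_one_div_sqrt_one_sub {t : ℝ} (ht : t < 1) :
    DifferentiableAt ℝ (fun s : ℝ => 1 / Real.sqrt (1 - s)) t := by
  have hpos : 0 < 1 - t := by linarith
  exact (differentiableAt_const _).div
    (((differentiableAt_const _).sub differentiableAt_id).sqrt hpos.ne') (Real.sqrt_pos.2 hpos).ne'

theorem one_div_sqrt_one_sub_sq_mul {t : ℝ} (ht : t < 1) :
    (1 / Real.sqrt (1 - t)) ^ 2 * (1 - t) = 1 := by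
  have hpos : 0 < 1 - t := by linarith
  rw [div_pow, Real.sq_sqrt hpos.le, one_pow, one_div_mul_cancel hpos.ne']

/-- `𝒮` is differentiable on the open unit ball and pulls back `λ_FS` to `λ`:
`λ_FS(𝒮(p))(D𝒮(p)·v) = λ(p)(v)` for all `p` in the ball and all `v`. -/
theorem stmt14 (p : EuclideanSpace ℝ (Fin 4)) (hp : ‖p‖ < 1) :
    DifferentiableAt ℝ Smap p ∧
      ∀ v : EuclideanSpace ℝ (Fin 4), lamFS (Smap p) (fderiv ℝ Smap p v) = lamStd p v := by
  have hp2 : ‖p‖ ^ 2 < 1 := pow_lt_one₀ (norm_nonneg p) hp two_ne_zero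
  have hf := differentiableAt_one_div_sqrt_one_sub hp2
  refine ⟨(hasFDerivAt_comp_normSq_smul hf).differentiableAt, fun v => ?_⟩
  unfold Smap
  rw [fderiv_comp_normSq_smul_apply (f := fun s => 1 / Real.sqrt (1 - s)) hf]
  exact lamFS_smul_smul_add (one_div_sqrt_one_sub_sq_mul hp2) v _
end
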